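/- Sauer–Shelah lemma: if a set family F over a finite set of size n has VC dimension at most d, then the number of distinct restrictions of F to the n points is at most ∑_{i=0}^{d} (n choose i). -/
import Mathlib


/-- A family of sets `F` shatters `S` if every subset of `S` is the trace of a member of `F`. -/
def ShattersFam {Ω : Type*} (F : Set (Set Ω)) (S : Set Ω) : Prop :=
  ∀ B ⊆ S, ∃ A ∈ F, A ∩ S = B

/-- Sauer–Shelah lemma: if a set family `F` shatters no set of cardinality `d + 1`
(i.e. its VC dimension is at most `d`), then the number of distinct restrictions of `F`
to any `n`-point set is at most `∑_{i=0}^{d} (n choose i)`. -/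
theorem sauer_shelah {Ω : Type*} (F : Set (Set Ω)) (d : ℕ)
    (hVC : ∀ S : Finset Ω, ShattersFam F ↑S → S.card ≤ d)
    (n : ℕ) (Ω₀ : Finset Ω) (hΩ₀ : Ω₀.card = n) :
    ({B : Set Ω | ∃ A ∈ F, B = A ∩ ↑Ω₀}).ncard ≤
      ∑ i ∈ Finset.range (d + 1), n.choose i := by
  classical
  set T : Set (Set Ω) := {B : Set Ω | ∃ A ∈ F, B = A ∩ ↑Ω₀} with hT
  -- map a trace to a finset of the subtype
  set g : Set Ω → Finset {x // x ∈ Ω₀} := fun B => Finset.univ.filter (fun x => (x : Ω) ∈ B)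
    with hg
  set 𝒜 : Finset (Finset {x // x ∈ Ω₀}) :=
    Finset.univ.filter (fun s => ∃ A ∈ F, s = g (A ∩ ↑Ω₀)) with h𝒜
  have hmemg : ∀ (B : Set Ω) (x : {x // x ∈ Ω₀}), x ∈ g B ↔ (x : Ω) ∈ B := by
    intro B x; simp [hg]
  -- T injects into 𝒜
  have hmaps : ∀ B ∈ T, g B ∈ (↑𝒜 : Set (Finset {x // x ∈ Ω₀})) := by
    rintro B ⟨A, hA, rfl⟩
    simp only [h𝒜, Finset.coe_filter, Set.mem_setOf_eq, Finset.mem_univ, true_and]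
    exact ⟨A, hA, rfl⟩
  have hinj : Set.InjOn g T := by
    rintro B ⟨A, hA, rfl⟩ B' ⟨A', hA', rfl⟩ h
    ext x
    constructor
    · rintro ⟨hxA, hxΩ⟩
      have := (hmemg (A ∩ ↑Ω₀) ⟨x, hxΩ⟩).2 ⟨hxA, hxΩ⟩
      rw [h] at this
      exact (hmemg (A' ∩ ↑Ω₀) ⟨x, hxΩ⟩).1 this
    · rintro ⟨hxA, hxΩ⟩
      have := (hmemg (A' ∩ ↑Ω₀) ⟨x, hxΩ⟩).2 ⟨hxA, hxΩ⟩
      rw [← h] at this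
      exact (hmemg (A ∩ ↑Ω₀) ⟨x, hxΩ⟩).1 this
  have h1 : T.ncard ≤ 𝒜.card := by
    have := Set.ncard_le_ncard_of_injOn g hmaps hinj (𝒜.finite_toSet)
    simpa [Set.ncard_coe_finset] using this
  -- vcDim bound
  have hvc : 𝒜.vcDim ≤ d := by
    refine Finset.sup_le ?_
    intro s hs
    have hsh : 𝒜.Shatters s := Finset.mem_shatterer.1 hs
    set S : Finset Ω := s.image Subtype.val with hS
    have hScard : S.card = s.card := Finset.card_image_of_injective _ Subtype.val_injective
    have : ShattersFam F ↑S := by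
      intro B hB
      set t : Finset {x // x ∈ Ω₀} := s.filter (fun x => (x : Ω) ∈ B) with ht
      obtain ⟨u, hu, hsu⟩ := hsh (show t ⊆ s from Finset.filter_subset _ s)
      simp only [h𝒜, Finset.mem_filter, Finset.mem_univ, true_and] at hu
      obtain ⟨A, hA, rfl⟩ := hu
      refine ⟨A, hA, ?_⟩
      ext x
      constructor
      · rintro ⟨hxA, hxS⟩
        simp only [hS, Finset.coe_image, Set.mem_image, Finset.mem_coe] at hxS
        obtain ⟨y, hy, rfl⟩ := hxS
        have hyu : y ∈ g (A ∩ ↑Ω₀) := (hmemg _ y).2 ⟨hxA, y.2⟩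
        have : y ∈ t := by rw [← hsu]; exact Finset.mem_inter.2 ⟨hy, hyu⟩
        exact (Finset.mem_filter.1 this).2
      · intro hxB
        have hxS : x ∈ (↑S : Set Ω) := hB hxB
        simp only [hS, Finset.coe_image, Set.mem_image, Finset.mem_coe] at hxS
        obtain ⟨y, hy, rfl⟩ := hxS
        have hyt : y ∈ t := Finset.mem_filter.2 ⟨hy, hxB⟩
        rw [← hsu] at hyt
        have := (hmemg _ y).1 (Finset.mem_inter.1 hyt).2
        exact ⟨this.1, hB hxB⟩
    have := hVC S this
    omega
  calc T.ncard ≤ 𝒜.card := h1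
    _ ≤ 𝒜.shatterer.card := Finset.card_le_card_shatterer 𝒜
    _ ≤ ∑ k ∈ Finset.Iic 𝒜.vcDim, (Fintype.card {x // x ∈ Ω₀}).choose k :=
        Finset.card_shatterer_le_sum_vcDim
    _ ≤ ∑ i ∈ Finset.range (d + 1), n.choose i := by
        rw [Fintype.card_coe, hΩ₀]
        refine Finset.sum_le_sum_of_subset ?_
        intro k hk
        simp only [Finset.mem_Iic] at hk
        simp only [Finset.mem_range]
        omega
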